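/- arXiv:0904.1916 — 2 statements merged into one kernel-verified Lean document; each statement's English description precedes it below -/
import Mathlib

section
/- Let u : ℝ → ℝ be three times continuously differentiable and let f : ℝ → ℝ be smooth (C^∞). Define the Schrödinger operator L by (L f)(x) = −f″(x) + u(x) f(x) and the operator A by (A f)(x) = 4 f‴(x) − 6 u(x) f′(x) − 3 u′(x) f(x). Then for every x ∈ ℝ, (L(A f))(x) − (A(L f))(x) = (6 u(x) u′(x) − u‴(x)) · f(x); that is, the commutator [L, A] = L∘A − A∘L is the operator of multiplication by the function 6 u u′ − u‴. -/
/-- The Schrödinger operator `L = −(d/dx)² + u`. -/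
noncomputable def schrodingerOp (u : ℝ → ℝ) (f : ℝ → ℝ) : ℝ → ℝ :=
  fun x => -iteratedDeriv 2 f x + u x * f x

/-- The third-order Lax operator `A = 4(d/dx)³ − 6u(d/dx) − 3u′`. -/
noncomputable def laxOp (u : ℝ → ℝ) (f : ℝ → ℝ) : ℝ → ℝ :=
  fun x => 4 * iteratedDeriv 3 f x - 6 * u x * deriv f x - 3 * deriv u x * f x

private lemma deriv_comb (k0 k1 k2 k3 k4 : ℝ) (a0 a1 b1 a2 b2 a3 b3 a4 b4 : ℝ → ℝ) (x : ℝ)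
    (h0 : Differentiable ℝ a0) (ha1 : Differentiable ℝ a1) (hb1 : Differentiable ℝ b1)
    (ha2 : Differentiable ℝ a2) (hb2 : Differentiable ℝ b2)
    (ha3 : Differentiable ℝ a3) (hb3 : Differentiable ℝ b3)
    (ha4 : Differentiable ℝ a4) (hb4 : Differentiable ℝ b4) :
    deriv (fun y => k0 * a0 y + k1 * (a1 y * b1 y) + k2 * (a2 y * b2 y)
        + k3 * (a3 y * b3 y) + k4 * (a4 y * b4 y)) x
      = k0 * deriv a0 x + k1 * (deriv a1 x * b1 x + a1 x * deriv b1 x)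
        + k2 * (deriv a2 x * b2 x + a2 x * deriv b2 x)
        + k3 * (deriv a3 x * b3 x + a3 x * deriv b3 x)
        + k4 * (deriv a4 x * b4 x + a4 x * deriv b4 x) :=
  ((((((h0 x).hasDerivAt.const_mul k0).add
      (((ha1 x).hasDerivAt.mul (hb1 x).hasDerivAt).const_mul k1)).add
      (((ha2 x).hasDerivAt.mul (hb2 x).hasDerivAt).const_mul k2)).add
      (((ha3 x).hasDerivAt.mul (hb3 x).hasDerivAt).const_mul k3)).add
      (((ha4 x).hasDerivAt.mul (hb4 x).hasDerivAt).const_mul k4)).deriv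

/-- For `u` of class `C³` and smooth `f`, the commutator `[L, A] = L∘A − A∘L`
of the Schrödinger operator `L = −(d/dx)² + u` and `A = 4(d/dx)³ − 6u(d/dx) − 3u′`
is multiplication by the function `6 u u′ − u‴`. -/
theorem lax_commutator_is_multiplication (u f : ℝ → ℝ)
    (hu : ContDiff ℝ 3 u) (hf : ContDiff ℝ (⊤ : ℕ∞) f) :
    ∀ x : ℝ,
      schrodingerOp u (laxOp u f) x - laxOp u (schrodingerOp u f) x
        = (6 * u x * deriv u x - iteratedDeriv 3 u x) * f x := by
  have hu0 : Differentiable ℝ u := hu.differentiable (by norm_num)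
  have hu1 : Differentiable ℝ (deriv u) := by
    have := hu.differentiable_iteratedDeriv 1 (by norm_num)
    simpa [iteratedDeriv_succ, iteratedDeriv_zero] using this
  have hu2 : Differentiable ℝ (deriv (deriv u)) := by
    have := hu.differentiable_iteratedDeriv 2 (by norm_num)
    simpa [iteratedDeriv_succ, iteratedDeriv_zero] using this
  have hf0 : Differentiable ℝ f := hf.differentiable (by norm_num)
  have hf1 : Differentiable ℝ (deriv f) := by
    have := hf.differentiable_iteratedDeriv 1 (by simp [lt_top_iff_ne_top])
    simpa [iteratedDeriv_succ, iteratedDeriv_zero] using this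
  have hf2 : Differentiable ℝ (deriv (deriv f)) := by
    have := hf.differentiable_iteratedDeriv 2 (WithTop.coe_lt_coe.mpr (ENat.coe_lt_top 2))
    simpa [iteratedDeriv_succ, iteratedDeriv_zero] using this
  have hf3 : Differentiable ℝ (deriv (deriv (deriv f))) := by
    have := hf.differentiable_iteratedDeriv 3 (WithTop.coe_lt_coe.mpr (ENat.coe_lt_top 3))
    simpa [iteratedDeriv_succ, iteratedDeriv_zero] using this
  have hf4 : Differentiable ℝ (deriv (deriv (deriv (deriv f)))) := by
    have := hf.differentiable_iteratedDeriv 4 (WithTop.coe_lt_coe.mpr (ENat.coe_lt_top 4))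
    simpa [iteratedDeriv_succ, iteratedDeriv_zero] using this
  -- canonical form of A f
  have eA : laxOp u f
      = (fun y => 4 * deriv (deriv (deriv f)) y + (-6) * (u y * deriv f y)
          + (-3) * (deriv u y * f y) + 0 * (u y * u y) + 0 * (u y * u y)) := by
    funext y; simp only [laxOp, iteratedDeriv_succ, iteratedDeriv_zero]; ring
  -- first derivative of A f
  have dA1 : deriv (fun y => 4 * deriv (deriv (deriv f)) y + (-6) * (u y * deriv f y)
          + (-3) * (deriv u y * f y) + 0 * (u y * u y) + 0 * (u y * u y))
      = (fun y => 4 * deriv (deriv (deriv (deriv f))) y + (-9) * (deriv u y * deriv f y)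
          + (-6) * (u y * deriv (deriv f) y) + (-3) * (deriv (deriv u) y * f y)
          + 0 * (u y * u y)) := by
    funext y
    rw [deriv_comb 4 (-6) (-3) 0 0 (deriv (deriv (deriv f))) u (deriv f) (deriv u) f
      u u u u y hf3 hu0 hf1 hu1 hf0 hu0 hu0 hu0 hu0]
    ring
  -- canonical form of L f
  have eL : schrodingerOp u f
      = (fun y => (-1) * deriv (deriv f) y + 1 * (u y * f y) + 0 * (u y * u y)
          + 0 * (u y * u y) + 0 * (u y * u y)) := by
    funext y; simp only [schrodingerOp, iteratedDeriv_succ, iteratedDeriv_zero]; ring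
  have dL1 : deriv (fun y => (-1) * deriv (deriv f) y + 1 * (u y * f y) + 0 * (u y * u y)
          + 0 * (u y * u y) + 0 * (u y * u y))
      = (fun y => (-1) * deriv (deriv (deriv f)) y + 1 * (deriv u y * f y)
          + 1 * (u y * deriv f y) + 0 * (u y * u y) + 0 * (u y * u y)) := by
    funext y
    rw [deriv_comb (-1) 1 0 0 0 (deriv (deriv f)) u f u u u u u u y
      hf2 hu0 hf0 hu0 hu0 hu0 hu0 hu0 hu0]
    ring
  have dL2 : deriv (fun y => (-1) * deriv (deriv (deriv f)) y + 1 * (deriv u y * f y)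
          + 1 * (u y * deriv f y) + 0 * (u y * u y) + 0 * (u y * u y))
      = (fun y => (-1) * deriv (deriv (deriv (deriv f))) y + 1 * (deriv (deriv u) y * f y)
          + 2 * (deriv u y * deriv f y) + 1 * (u y * deriv (deriv f) y) + 0 * (u y * u y)) := by
    funext y
    rw [deriv_comb (-1) 1 1 0 0 (deriv (deriv (deriv f))) (deriv u) f u (deriv f) u u u u y
      hf3 hu1 hf0 hu0 hf1 hu0 hu0 hu0 hu0]
    ring
  intro x
  simp only [schrodingerOp, laxOp, iteratedDeriv_succ, iteratedDeriv_zero]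
  rw [eA, dA1, eL, dL1, dL2]
  rw [deriv_comb 4 (-9) (-6) (-3) 0 (deriv (deriv (deriv (deriv f)))) (deriv u) (deriv f)
    u (deriv (deriv f)) (deriv (deriv u)) f u u x hf4 hu1 hf1 hu0 hf2 hu2 hf0 hu0 hu0]
  rw [deriv_comb (-1) 1 2 1 0 (deriv (deriv (deriv (deriv f)))) (deriv (deriv u)) f
    (deriv u) (deriv f) u (deriv (deriv f)) u u x hf4 hu2 hf0 hu1 hf1 hu0 hf2 hu0 hu0]
  ring
end

section
/- Let B = ℂ[x₁, x₂, x₃, …] be the polynomial ring over ℂ in countably many variables. Suppose W is a ℂ-linear subspace of B that is invariant under the partial derivative operator ∂/∂x_n for every n ≥ 1 and under the multiplication operator p ↦ x_n · p for every n ≥ 1. If W ≠ {0}, then W = B. (Equivalently: the Fock representation of the Heisenberg algebra on B with ℏ ≠ 0 is irreducible.) -/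
/-!
Some partial derivative of a nonconstant polynomial is nonzero (in characteristic zero), and every
nonzero partial derivative has smaller total degree. Differentiating a nonzero element of `W`
repeatedly therefore reaches a nonzero constant, so `1 ∈ W`; the multiplications by the `x_n`
then generate all of `B` from `1`.
-/

namespace MvPolynomial

variable {σ R : Type*}

theorem totalDegree_pderiv_lt [CommSemiring R] {p : MvPolynomial σ R} {i : σ}
    (hp : pderiv i p ≠ 0) : (pderiv i p).totalDegree < p.totalDegree := by
  obtain ⟨m, hm, hdeg⟩ := Finset.exists_mem_eq_sup (pderiv i p).support
    (support_nonempty.mpr hp) fun s => s.sum fun _ e => e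
  have hshift : m + Finsupp.single i 1 ∈ p.support := by
    rw [mem_support_iff] at hm ⊢
    exact left_ne_zero_of_mul (coeff_pderiv p m ▸ hm)
  calc (pderiv i p).totalDegree = m.sum fun _ e => e := hdeg
    _ < (m + Finsupp.single i 1).sum fun _ e => e := by
      rw [Finsupp.sum_add_index' (fun _ => rfl) fun _ _ _ => rfl, Finsupp.sum_single_index rfl]
      exact Nat.lt_succ_self _
    _ ≤ p.totalDegree := le_totalDegree hshift

theorem exists_pderiv_ne_zero [CommSemiring R] [NoZeroDivisors R] [CharZero R]
    {p : MvPolynomial σ R} (hp : p.totalDegree ≠ 0) : ∃ i, pderiv i p ≠ 0 := by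
  obtain ⟨d, hd⟩ : ∃ d, coeff d p ≠ coeff d (C (coeff 0 p)) := by
    by_contra! h
    exact hp (totalDegree_eq_zero_iff_eq_C.mpr (MvPolynomial.ext _ _ h))
  have hd0 : d ≠ 0 := by
    rintro rfl
    simp at hd
  classical
  rw [coeff_C, if_neg (Ne.symm hd0)] at hd
  obtain ⟨i, hi⟩ := Finsupp.ne_iff.mp hd0
  have hle : Finsupp.single i 1 ≤ d := Finsupp.single_le_iff.mpr (Nat.one_le_iff_ne_zero.mpr hi)
  refine ⟨i, fun h => ?_⟩
  have hcoeff := coeff_pderiv (i := i) p (d - Finsupp.single i 1)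
  rw [h, coeff_zero, tsub_add_cancel_of_le hle] at hcoeff
  exact mul_ne_zero hd (Nat.cast_add_one_ne_zero _) hcoeff.symm

theorem one_mem_of_forall_pderiv_mem {K : Type*} [Field K] [CharZero K]
    {W : Submodule K (MvPolynomial σ K)} (hW : ∀ i, ∀ p ∈ W, pderiv i p ∈ W)
    {p : MvPolynomial σ K} (hpW : p ∈ W) (hp : p ≠ 0) : 1 ∈ W := by
  induction hdeg : p.totalDegree using Nat.strong_induction_on generalizing p with
  | _ n ih =>
    rcases eq_or_ne n 0 with rfl | hn
    · rw [totalDegree_eq_zero_iff_eq_C] at hdeg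
      have hc : coeff 0 p ≠ 0 := fun h => hp (by rw [hdeg, h, map_zero])
      have h1 : (coeff 0 p)⁻¹ • p = 1 := by
        rw [hdeg, smul_eq_C_mul, ← C_mul, coeff_zero_C, inv_mul_cancel₀ hc, C_1]
      exact h1 ▸ W.smul_mem _ hpW
    · obtain ⟨i, hi⟩ := exists_pderiv_ne_zero (hdeg ▸ hn)
      exact ih _ (hdeg ▸ totalDegree_pderiv_lt hi) (hW i p hpW) hi rfl

theorem mul_mem_of_forall_X_mul_mem [CommSemiring R] {W : Submodule R (MvPolynomial σ R)}
    (hW : ∀ i, ∀ p ∈ W, X i * p ∈ W) {p : MvPolynomial σ R} (hp : p ∈ W)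
    (q : MvPolynomial σ R) : q * p ∈ W := by
  induction q using MvPolynomial.induction_on with
  | C a => simpa only [C_mul'] using W.smul_mem a hp
  | add q r hq hr => exact add_mul q r p ▸ W.add_mem hq hr
  | mul_X q i hq => exact (by ring : X i * (q * p) = q * X i * p) ▸ hW i _ hq

end MvPolynomial

open MvPolynomial

/-- A nonzero subspace of `B = ℂ[x₁, x₂, …]` invariant under all partial
derivatives `∂/∂x_n` and all multiplication operators `p ↦ x_n p` is all of `B`
(irreducibility of the Fock representation of the Heisenberg algebra). -/
theorem fock_representation_irreducible (W : Submodule ℂ (MvPolynomial ℕ+ ℂ))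
    (hderiv : ∀ (n : ℕ+) (p : MvPolynomial ℕ+ ℂ), p ∈ W → pderiv n p ∈ W)
    (hmul : ∀ (n : ℕ+) (p : MvPolynomial ℕ+ ℂ), p ∈ W → X n * p ∈ W)
    (hW : W ≠ ⊥) : W = ⊤ := by
  obtain ⟨p, hpW, hp⟩ := Submodule.exists_mem_ne_zero_of_ne_bot hW
  have h1 : (1 : MvPolynomial ℕ+ ℂ) ∈ W := one_mem_of_forall_pderiv_mem hderiv hpW hp
  exact Submodule.eq_top_iff'.mpr fun q => mul_one q ▸ mul_mem_of_forall_X_mul_mem hmul h1 q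
end
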